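/- Let d ≥ 1 and 0 < m ≤ M₂ be real numbers. Let H be a symmetric d×d real matrix with (m/M₂)·I_d ≼ H ≼ I_d. Define the 2d×2d block matrices A = [[0, −I_d], [H, 2I_d]] and S = [[2I_d, I_d], [I_d, I_d]]. Then AᵀS + SA ≽ (m/M₂)·S. -/

import Mathlib

open Matrix

theorem stmt_0 (d : ℕ) (hd : 1 ≤ d) (m M₂ : ℝ) (hm : 0 < m) (hmM : m ≤ M₂)
    (H : Matrix (Fin d) (Fin d) ℝ) (hHsymm : H.IsSymm)
    (hHlow : (H - (m / M₂) • (1 : Matrix (Fin d) (Fin d) ℝ)).PosSemidef)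
    (hHup : ((1 : Matrix (Fin d) (Fin d) ℝ) - H).PosSemidef)
    (A S : Matrix (Fin d ⊕ Fin d) (Fin d ⊕ Fin d) ℝ)
    (hA : A = Matrix.fromBlocks 0 (-1) H ((2 : ℝ) • 1))
    (hS : S = Matrix.fromBlocks ((2 : ℝ) • 1) 1 1 1) :
    (Aᵀ * S + S * A - (m / M₂) • S).PosSemidef := by
  have hM₂ : 0 < M₂ := lt_of_lt_of_le hm hmM
  set ε : ℝ := m / M₂ with hε
  have hε1 : ε ≤ 1 := by rw [hε, div_le_one hM₂]; exact hmM
  set M := Aᵀ * S + S * A - ε • S with hM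
  have hSsymm : Sᵀ = S := by
    subst hS
    simp [Matrix.fromBlocks_transpose, Matrix.transpose_smul]
  have hMT : Mᵀ = M := by
    rw [hM]
    simp only [Matrix.transpose_sub, Matrix.transpose_add, Matrix.transpose_mul,
      Matrix.transpose_smul, Matrix.transpose_transpose, hSsymm]
    rw [add_comm (S * A)]
  refine Matrix.posSemidef_iff_dotProduct_mulVec.mpr ⟨?_, ?_⟩
  · show Mᴴ = M
    rw [Matrix.conjTranspose_eq_transpose_of_trivial, hMT]
  · intro x
    -- expand blocks
    have hMblocks : M = Matrix.fromBlocks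
        ((2:ℝ) • H - (2*ε) • 1) (H - ε • 1) (H - ε • 1) (((2:ℝ) - ε) • 1) := by
      rw [hM, hA, hS]
      rw [Matrix.fromBlocks_transpose, Matrix.fromBlocks_multiply,
        Matrix.fromBlocks_multiply, Matrix.fromBlocks_smul]
      rw [Matrix.fromBlocks_add]
      ext i j
      rcases i with i | i <;> rcases j with j | j <;>
        simp [Matrix.fromBlocks, hHsymm.eq, Matrix.sub_apply, Matrix.add_apply,
          Matrix.smul_apply, Matrix.one_apply, mul_comm] <;> (try split_ifs) <;> ring
    obtain ⟨u, v, rfl⟩ : ∃ u v, x = Sum.elim u v :=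
      ⟨x ∘ Sum.inl, x ∘ Sum.inr, by funext i; cases i <;> rfl⟩
    rw [hMblocks, Matrix.fromBlocks_mulVec]
    have hstar : star (Sum.elim u v) = Sum.elim u v := by
      funext i; simp
    rw [hstar, sumElim_dotProduct_sumElim]
    have hsym : ∀ a b : Fin d → ℝ, a ⬝ᵥ (H *ᵥ b) = b ⬝ᵥ (H *ᵥ a) := by
      intro a b
      conv_lhs => rw [← hHsymm.eq, Matrix.mulVec_transpose]
      rw [dotProduct_comm, ← Matrix.dotProduct_mulVec]
    have h1 : 0 ≤ u ⬝ᵥ (H *ᵥ u) - ε * (u ⬝ᵥ u) := by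
      have := hHlow.dotProduct_mulVec_nonneg u
      simpa [Matrix.sub_mulVec, Matrix.smul_mulVec, dotProduct_sub,
        dotProduct_smul, smul_eq_mul] using this
    have h2 : 0 ≤ (u + v) ⬝ᵥ ((H - ε • 1) *ᵥ (u + v)) := by
      simpa using hHlow.dotProduct_mulVec_nonneg (u + v)
    have h3 : v ⬝ᵥ (H *ᵥ v) ≤ v ⬝ᵥ v := by
      have := hHup.dotProduct_mulVec_nonneg v
      simp only [Matrix.sub_mulVec, Matrix.one_mulVec, dotProduct_sub,
        star_trivial] at this
      linarith
    have hr : (0:ℝ) ≤ v ⬝ᵥ v := by simpa using dotProduct_star_self_nonneg v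
    have h2' : 0 ≤ u ⬝ᵥ (H *ᵥ u) + 2 * (u ⬝ᵥ (H *ᵥ v)) + v ⬝ᵥ (H *ᵥ v)
        - ε * (u ⬝ᵥ u + 2 * (u ⬝ᵥ v) + v ⬝ᵥ v) := by
      have e1 : (u + v) ⬝ᵥ ((H - ε • 1) *ᵥ (u + v))
          = u ⬝ᵥ (H *ᵥ u) + 2 * (u ⬝ᵥ (H *ᵥ v)) + v ⬝ᵥ (H *ᵥ v)
            - ε * (u ⬝ᵥ u + 2 * (u ⬝ᵥ v) + v ⬝ᵥ v) := by
        simp only [Matrix.sub_mulVec, Matrix.smul_mulVec, Matrix.one_mulVec,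
          Matrix.mulVec_add, dotProduct_add, add_dotProduct,
          dotProduct_sub, dotProduct_smul, smul_eq_mul,
          hsym v u, dotProduct_comm v u]
        ring
      rw [e1] at h2
      exact h2
    simp only [Matrix.sub_mulVec, Matrix.smul_mulVec, Matrix.one_mulVec,
      Matrix.add_mulVec, dotProduct_add, dotProduct_sub,
      dotProduct_smul, smul_eq_mul, Sum.elim_comp_inl, Sum.elim_comp_inr]
    have hsv : v ⬝ᵥ (H *ᵥ u) = u ⬝ᵥ (H *ᵥ v) := hsym v u
    have hqc : v ⬝ᵥ u = u ⬝ᵥ v := dotProduct_comm v u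
    rw [hsv, hqc]
    set a := u ⬝ᵥ (H *ᵥ u) with ha
    set b := u ⬝ᵥ (H *ᵥ v) with hb
    set c := v ⬝ᵥ (H *ᵥ v) with hc
    set p := u ⬝ᵥ u with hp
    set q := u ⬝ᵥ v with hq
    set r := v ⬝ᵥ v with hrr
    nlinarith [h1, h2', h3, hr]
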